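/- Let f : ℝⁿ → ℝ be a continuous function with f^lc > -∞ everywhere and lim_{|ξ|→+∞} f(ξ) = +∞. Then for every c ∈ ℝ, the convex hull of the sublevel set of f at level c equals the sublevel set of f^lc at level c: co{ξ ∈ ℝⁿ : f(ξ) ≤ c} = {ξ ∈ ℝⁿ : f^lc(ξ) ≤ c}. -/

import Mathlib

open Set

/-- A function on `ℝⁿ` with values in a linear order is *level convex* if
`f (t ξ + (1-t) η) ≤ max (f ξ) (f η)` for all `ξ, η` and `t ∈ [0,1]`. -/
def LevelConvex {n : ℕ} {β : Type*} [LinearOrder β]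
    (f : EuclideanSpace ℝ (Fin n) → β) : Prop :=
  ∀ ξ η : EuclideanSpace ℝ (Fin n), ∀ t ∈ Set.Icc (0 : ℝ) 1,
    f (t • ξ + (1 - t) • η) ≤ max (f ξ) (f η)

/-- The level convex envelope of `f : ℝⁿ → [-∞,+∞]`. -/
noncomputable def lcEnv {n : ℕ} (f : EuclideanSpace ℝ (Fin n) → EReal) :
    EuclideanSpace ℝ (Fin n) → EReal :=
  fun ξ => ⨆ (g : EuclideanSpace ℝ (Fin n) → EReal)
    (_ : LevelConvex g ∧ g ≤ f), g ξ

open Module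

/-! The function `x ↦ inf {d : x ∈ co {f ≤ d}}` is level convex and lies below `f`, hence below
`f^lc`; so `f^lc ξ ≤ c` puts `ξ` in `co {f ≤ d}` for every `d > c`. Coercivity makes the sublevel
sets compact, so by Carathéodory their convex hulls are compact too, and a point outside
`co {f ≤ c}` is strictly separated from it by a hyperplane. The far side of that hyperplane meets
`{f ≤ d}` for every `d > c`, hence, by compactness, also `{f ≤ c}`: a contradiction. The other
inclusion holds because the sublevel sets of the level convex function `f^lc` are convex. -/

section Caratheodory

variable {𝕜 E : Type*} [Field 𝕜] [LinearOrder 𝕜] [IsStrictOrderedRing 𝕜] [AddCommGroup E]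
  [Module 𝕜 E] [FiniteDimensional 𝕜 E]

theorem convexHull_eq_image_stdSimplex_prod_pi (s : Set E) :
    convexHull 𝕜 s = (fun p : (Fin (finrank 𝕜 E + 1) → 𝕜) × (Fin (finrank 𝕜 E + 1) → E) =>
      ∑ i, p.1 i • p.2 i) '' (stdSimplex 𝕜 _ ×ˢ univ.pi fun _ => s) := by
  refine Subset.antisymm (fun x hx => ?_) ?_
  · obtain ⟨s₀, hs₀⟩ := convexHull_nonempty_iff.1 ⟨x, hx⟩
    obtain ⟨ι, _, z, w, hzs, hz, hw₀, hw₁, rfl⟩ := eq_pos_convex_span_of_mem_convexHull hx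
    obtain ⟨e⟩ : Nonempty (ι ↪ Fin (finrank 𝕜 E + 1)) :=
      Function.Embedding.nonempty_of_card_le <| by
        simpa using hz.card_le_finrank_succ.trans (Nat.succ_le_succ (Submodule.finrank_le _))
    set w' := Function.extend e w 0
    set z' := Function.extend e z fun _ => s₀
    have hw' (i) : w' (e i) = w i := e.injective.extend_apply _ _ _
    have hz' (i) : z' (e i) = z i := e.injective.extend_apply _ _ _
    have hw'_zero (j) (hj : j ∉ range e) : w' j = 0 := Function.extend_apply' _ _ _ hj
    refine ⟨(w', z'), ⟨⟨fun j => ?_, ?_⟩, fun j _ => ?_⟩, ?_⟩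
    · by_cases hj : j ∈ range e
      · obtain ⟨i, rfl⟩ := hj
        exact (hw₀ i).le.trans_eq (hw' i).symm
      · exact (hw'_zero j hj).ge
    · rw [← hw₁]
      exact (Fintype.sum_of_injective e e.injective w w' hw'_zero fun i => (hw' i).symm).symm
    · show z' j ∈ s
      by_cases hj : j ∈ range e
      · obtain ⟨i, rfl⟩ := hj
        exact (hz' i) ▸ hzs (mem_range_self i)
      · rwa [show z' j = s₀ from Function.extend_apply' _ _ _ hj]
    · refine (Fintype.sum_of_injective e e.injective _ _ (fun j hj => ?_) fun i => ?_).symm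
      · simp only [hw'_zero j hj, zero_smul]
      · simp only [hw', hz']
  · rintro _ ⟨⟨w, z⟩, ⟨hw, hz⟩, rfl⟩
    exact mem_convexHull_of_exists_fintype w z hw.1 hw.2 (fun i => hz i (mem_univ i)) rfl

end Caratheodory

theorem IsCompact.convexHull {E : Type*} [TopologicalSpace E] [AddCommGroup E] [Module ℝ E]
    [ContinuousAdd E] [ContinuousSMul ℝ E] [FiniteDimensional ℝ E] {s : Set E}
    (hs : IsCompact s) : IsCompact (convexHull ℝ s) := by
  rw [convexHull_eq_image_stdSimplex_prod_pi]
  exact ((isCompact_stdSimplex ℝ _).prod (isCompact_univ_pi fun _ => hs)).image (by fun_prop)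

section LevelConvex

variable {n : ℕ} {β : Type*} [LinearOrder β] {g : EuclideanSpace ℝ (Fin n) → β}

theorem levelConvex_iff_forall_convex_setOf_le :
    LevelConvex g ↔ ∀ r, Convex ℝ {x | g x ≤ r} := by
  refine ⟨fun hg r x hx y hy a b ha hb hab => ?_, fun h x y t ht => ?_⟩
  · obtain rfl : b = 1 - a := by linarith
    exact (hg x y a ⟨ha, by linarith⟩).trans (max_le hx hy)
  · exact h _ (le_max_left (g x) (g y)) (le_max_right _ _) ht.1 (sub_nonneg.2 ht.2)
      (add_sub_cancel _ _)

theorem LevelConvex.convex_setOf_le (hg : LevelConvex g) (r : β) : Convex ℝ {x | g x ≤ r} :=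
  levelConvex_iff_forall_convex_setOf_le.1 hg r

end LevelConvex

section lcEnv

variable {n : ℕ} {f g : EuclideanSpace ℝ (Fin n) → EReal}

theorem lcEnv_le (f : EuclideanSpace ℝ (Fin n) → EReal) : lcEnv f ≤ f :=
  fun _ => iSup₂_le fun _ hg => hg.2 _

theorem le_lcEnv (hg : LevelConvex g) (hgf : g ≤ f) : g ≤ lcEnv f :=
  fun x => le_iSup₂ (f := fun g (_ : LevelConvex g ∧ g ≤ f) => g x) g ⟨hg, hgf⟩

theorem levelConvex_lcEnv (f : EuclideanSpace ℝ (Fin n) → EReal) : LevelConvex (lcEnv f) := by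
  refine levelConvex_iff_forall_convex_setOf_le.2 fun r => ?_
  simp only [lcEnv, iSup₂_le_iff, ofPred_forall]
  exact convex_iInter₂ fun g hg => hg.1.convex_setOf_le r

end lcEnv

section convexHullLevel

variable {E : Type*} [AddCommGroup E] [Module ℝ E]

noncomputable def convexHullLevel (f : E → ℝ) (x : E) : EReal :=
  ⨅ (d : ℝ) (_ : x ∈ convexHull ℝ {y | f y ≤ d}), (d : EReal)

theorem convexHullLevel_le_iff {f : E → ℝ} {x : E} {r : EReal} :
    convexHullLevel f x ≤ r ↔ ∀ d : ℝ, r < d → x ∈ convexHull ℝ {y | f y ≤ d} := by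
  refine ⟨fun h d hd => ?_, fun h => EReal.le_of_forall_lt_iff_le.1 fun d hd => iInf₂_le d (h d hd)⟩
  obtain ⟨d', hd'⟩ := iInf_lt_iff.1 (h.trans_lt hd)
  obtain ⟨hx, hlt⟩ := iInf_lt_iff.1 hd'
  exact convexHull_mono (fun y (hy : f y ≤ d') => hy.trans (EReal.coe_lt_coe_iff.1 hlt).le) hx

theorem convexHullLevel_le_self (f : E → ℝ) : convexHullLevel f ≤ fun x => (f x : EReal) :=
  fun x => iInf₂_le (f x) (subset_convexHull ℝ {y | f y ≤ f x} (le_refl (f x)))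

theorem convex_setOf_convexHullLevel_le (f : E → ℝ) (r : EReal) :
    Convex ℝ {x | convexHullLevel f x ≤ r} := by
  simp only [convexHullLevel_le_iff, ofPred_forall]
  exact convex_iInter₂ fun _ _ => convex_convexHull ℝ _

theorem levelConvex_convexHullLevel {n : ℕ} (f : EuclideanSpace ℝ (Fin n) → ℝ) :
    LevelConvex (convexHullLevel f) :=
  levelConvex_iff_forall_convex_setOf_le.2 (convex_setOf_convexHullLevel_le f)

end convexHullLevel

theorem isCompact_setOf_le_of_coercive {E : Type*} [SeminormedAddCommGroup E] [ProperSpace E]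
    {f : E → ℝ} (hf : LowerSemicontinuous f) (hcoer : ∀ M : ℝ, ∃ R : ℝ, ∀ x : E, R ≤ ‖x‖ → M ≤ f x)
    (d : ℝ) : IsCompact {x | f x ≤ d} := by
  obtain ⟨R, hR⟩ := hcoer (d + 1)
  refine Metric.isCompact_of_isClosed_isBounded (hf.isClosed_preimage d)
    ((Metric.isBounded_closedBall (x := 0) (r := R)).subset fun x (hx : f x ≤ d) => ?_)
  rw [mem_closedBall_zero_iff]
  by_contra! h
  linarith [hR x h.le]

theorem exists_mem_le_of_forall_lt {X : Type*} [TopologicalSpace X] [T2Space X] {f : X → ℝ}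
    (hf : ∀ d, IsCompact {x | f x ≤ d}) {C : Set X} (hC : IsClosed C) {c : ℝ}
    (h : ∀ d, c < d → ∃ x ∈ C, f x ≤ d) : ∃ x ∈ C, f x ≤ c := by
  have hf_lsc : LowerSemicontinuous f :=
    lowerSemicontinuous_iff_isClosed_preimage.2 fun d => (hf d).isClosed
  obtain ⟨a, ha, hmin⟩ := (hf_lsc.lowerSemicontinuousOn _).exists_isMinOn
    (h (c + 1) (lt_add_one c)) ((hf (c + 1)).inter_left hC)
  refine ⟨a, ha.1, le_of_forall_gt_imp_ge_of_dense fun d hd => ?_⟩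
  obtain ⟨x, hxC, hx⟩ := h (min d (c + 1)) (lt_min hd (lt_add_one c))
  exact (isMinOn_iff.1 hmin x ⟨hxC, hx.trans (min_le_right _ _)⟩).trans
    (hx.trans (min_le_left _ _))

theorem mem_convexHull_setOf_le_of_forall_lt {E : Type*} [NormedAddCommGroup E]
    [NormedSpace ℝ E] [FiniteDimensional ℝ E] {f : E → ℝ} (hf : ∀ d, IsCompact {x | f x ≤ d})
    {c : ℝ} {ξ : E} (h : ∀ d, c < d → ξ ∈ convexHull ℝ {x | f x ≤ d}) :
    ξ ∈ convexHull ℝ {x | f x ≤ c} := by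
  by_contra hξ
  obtain ⟨φ, u, hφ, hφξ⟩ :=
    geometric_hahn_banach_closed_point (convex_convexHull ℝ _) (hf c).convexHull.isClosed hξ
  have hmeets (d : ℝ) (hd : c < d) : ∃ x ∈ {x | u ≤ φ x}, f x ≤ d := by
    by_contra! hmiss
    have : convexHull ℝ {x | f x ≤ d} ⊆ {x | φ x < u} :=
      convexHull_min (fun x hx => (lt_of_not_ge fun hux => (hmiss x hux).not_ge hx : φ x < u))
        (convex_halfSpace_lt φ.isLinear u)
    exact (this (h d hd)).not_gt hφξ
  obtain ⟨x, hux, hx⟩ :=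
    exists_mem_le_of_forall_lt hf (isClosed_le continuous_const φ.continuous) hmeets
  exact (hφ x (subset_convexHull ℝ _ hx)).not_ge hux

theorem convexHull_sublevel_eq_sublevel_lcEnv_general {n : ℕ}
    (f : EuclideanSpace ℝ (Fin n) → ℝ) (hf : Continuous f)
    (hcoer : ∀ M : ℝ, ∃ R : ℝ, ∀ ξ : EuclideanSpace ℝ (Fin n), R ≤ ‖ξ‖ → M ≤ f ξ) :
    ∀ c : ℝ,
      convexHull ℝ {ξ : EuclideanSpace ℝ (Fin n) | f ξ ≤ c} =
        {ξ : EuclideanSpace ℝ (Fin n) | lcEnv (fun η => (f η : EReal)) ξ ≤ (c : EReal)} := by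
  intro c
  have hf_cpt := isCompact_setOf_le_of_coercive hf.lowerSemicontinuous hcoer
  refine Subset.antisymm
    (convexHull_min (fun x hx => ?_) ((levelConvex_lcEnv _).convex_setOf_le _)) fun ξ hξ => ?_
  · exact (lcEnv_le _ x).trans (EReal.coe_le_coe hx)
  · have hξ_level : convexHullLevel f ξ ≤ c :=
      (le_lcEnv (levelConvex_convexHullLevel f) (convexHullLevel_le_self f) ξ).trans hξ
    exact mem_convexHull_setOf_le_of_forall_lt hf_cpt fun d hd =>
      convexHullLevel_le_iff.1 hξ_level d (EReal.coe_lt_coe_iff.2 hd)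

/-- If `f : ℝⁿ → ℝ` is continuous, `f^lc > -∞` everywhere, and `f ξ → +∞` as
`|ξ| → +∞`, then for every `c ∈ ℝ`,
`co {ξ : f ξ ≤ c} = {ξ : f^lc ξ ≤ c}`. -/
theorem convexHull_sublevel_eq_sublevel_lcEnv {n : ℕ}
    (f : EuclideanSpace ℝ (Fin n) → ℝ) (hf : Continuous f)
    (hlcbot : ∀ ξ, lcEnv (fun η => (f η : EReal)) ξ ≠ ⊥)
    (hcoer : ∀ M : ℝ, ∃ R : ℝ, ∀ ξ : EuclideanSpace ℝ (Fin n), R ≤ ‖ξ‖ → M ≤ f ξ) :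
    ∀ c : ℝ,
      convexHull ℝ {ξ : EuclideanSpace ℝ (Fin n) | f ξ ≤ c} =
        {ξ : EuclideanSpace ℝ (Fin n) | lcEnv (fun η => (f η : EReal)) ξ ≤ (c : EReal)} :=
  convexHull_sublevel_eq_sublevel_lcEnv_general f hf hcoer
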